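/- arXiv:1811.12731 — 2 statements merged into one kernel-verified Lean document; each statement's English description precedes it below -/
import Mathlib

section
/- Let n ≥ 1, p > 1 + 2/n, δ > 1, and fix x₀ ∈ ℝⁿ. Then there exists λ₀ > 0 such that for every 0 < λ ≤ λ₀ the following holds: for every measurable u₀ : ℝⁿ → ℝ with 0 ≤ u₀(x) ≤ (λ/2)·G_δ(x − x₀) for all x, and every measurable u : ℝⁿ × [0,∞) → ℝ with 0 ≤ u(y,s) ≤ λ·G_{s+δ}(y − x₀) for all (y,s), the function Tu(x,t) := ∫_{ℝⁿ} G_t(x − y)u₀(y) dy + ∫₀ᵗ ∫_{ℝⁿ} G_{t−s}(x − y)·u(y,s)^p dy ds satisfies 0 ≤ Tu(x,t) ≤ λ·G_{t+δ}(x − x₀) for all x ∈ ℝⁿ and t ≥ 0. (That is, the integral operator T maps the set S = { u : 0 ≤ u(x,t) ≤ λ G_{t+δ}(x−x₀) } into itself; note that p > 1 + 2/n guarantees ∫₀^∞ (4π(s+δ))^{−n(p−1)/2} ds < ∞.) -/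
open MeasureTheory Real

/-- The Gaussian heat kernel on `ℝⁿ`: `G_t(x) = (4πt)^{-n/2} exp(-‖x‖²/(4t))`. -/
noncomputable def heatKernel (n : ℕ) (t : ℝ) (x : EuclideanSpace ℝ (Fin n)) : ℝ :=
  (4 * Real.pi * t) ^ (-(n : ℝ) / 2) * Real.exp (-‖x‖ ^ 2 / (4 * t))

/-- The integral operator `T` of the Duhamel formulation:
`Tu(x,t) = ∫ G_t(x-y) u₀(y) dy + ∫₀ᵗ ∫ G_{t-s}(x-y) u(y,s)^p dy ds`. -/
noncomputable def duhamelOp (n : ℕ) (p : ℝ) (u₀ : EuclideanSpace ℝ (Fin n) → ℝ)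
    (u : EuclideanSpace ℝ (Fin n) → ℝ → ℝ) (x : EuclideanSpace ℝ (Fin n)) (t : ℝ) : ℝ :=
  (∫ y, heatKernel n t (x - y) * u₀ y) +
    ∫ s in (0 : ℝ)..t, ∫ y, heatKernel n (t - s) (x - y) * u y s ^ p

/-!
Since `G_s * G_t = G_{s+t}`, data below `c G_δ(· - x₀)` stay below `c G_{t+δ}(· - x₀)` under the
heat flow, which bounds the free term by `(λ/2) G_{t+δ}(x - x₀)`. For the source term,
`G_τ^p ≤ (4πτ)^{-κ} G_τ` with `κ = n(p-1)/2`, so the source at time `s` lies below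
`λ^p (4π(s+δ))^{-κ} G_{s+δ}(· - x₀)` and contributes at most `λ^p (4π(s+δ))^{-κ} G_{t+δ}(x - x₀)`.
Integrating in `s` gives `λ^p C G_{t+δ}(x - x₀)` with `C = ∫₀^∞ (4π(s+δ))^{-κ} ds`, finite because
`κ > 1`, i.e. `p > 1 + 2/n`. Taking `λ₀^{p-1} C ≤ 1/2` makes the sum at most `λ G_{t+δ}(x - x₀)`.
-/

/-- Completing the square in the exponents of two heat kernels. -/
lemma neg_sq_norm_div_add_neg_sq_norm_div {E : Type*} [NormedAddCommGroup E]
    [InnerProductSpace ℝ E] {s t : ℝ} (hs : 0 < s) (ht : 0 < t) (a b : E) :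
    -‖a‖ ^ 2 / (4 * s) + -‖b‖ ^ 2 / (4 * t)
      = -‖a + b‖ ^ 2 / (4 * (s + t)) +
        -‖(t / (s + t)) • a - (s / (s + t)) • b‖ ^ 2 / (4 * (s * t / (s + t))) := by
  have hst : 0 < s + t := by linarith
  rw [norm_add_sq_real, norm_sub_sq_real, norm_smul, norm_smul, real_inner_smul_left,
    real_inner_smul_right, Real.norm_of_nonneg (by positivity : 0 ≤ t / (s + t)),
    Real.norm_of_nonneg (by positivity : 0 ≤ s / (s + t))]
  field_simp
  ring

namespace heatKernel

variable {n : ℕ}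

lemma nonneg {t : ℝ} (ht : 0 ≤ t) (x : EuclideanSpace ℝ (Fin n)) : 0 ≤ heatKernel n t x :=
  mul_nonneg (rpow_nonneg (by positivity) _) (exp_nonneg _)

lemma zero_left (hn : n ≠ 0) (x : EuclideanSpace ℝ (Fin n)) : heatKernel n 0 x = 0 := by
  rw [heatKernel, mul_zero, zero_rpow (by simpa using hn), zero_mul]

lemma integral_eq_one {t : ℝ} (ht : 0 < t) :
    ∫ x : EuclideanSpace ℝ (Fin n), heatKernel n t x = 1 := by
  have hexp (x : EuclideanSpace ℝ (Fin n)) :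
      exp (-‖x‖ ^ 2 / (4 * t)) = exp (-(4 * t)⁻¹ * ‖x‖ ^ 2) := by ring_nf
  simp_rw [heatKernel, hexp]
  rw [integral_const_mul, GaussianFourier.integral_rexp_neg_mul_sq_norm (by positivity),
    finrank_euclideanSpace_fin, show π / (4 * t)⁻¹ = 4 * π * t by field_simp,
    ← rpow_add (by positivity), neg_div, neg_add_cancel, rpow_zero]

lemma integrable {t : ℝ} (ht : 0 < t) : Integrable (heatKernel n t) :=
  integrable_of_integral_eq_one (integral_eq_one ht)

lemma mul_eq {s t : ℝ} (hs : 0 < s) (ht : 0 < t) (x z y : EuclideanSpace ℝ (Fin n)) :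
    heatKernel n s (x - y) * heatKernel n t (y - z)
      = heatKernel n (s + t) (x - z) *
        heatKernel n (s * t / (s + t)) (y - ((t / (s + t)) • x + (s / (s + t)) • z)) := by
  have hst : 0 < s + t := by linarith
  unfold heatKernel
  rw [mul_mul_mul_comm, mul_mul_mul_comm ((4 * π * (s + t)) ^ (-(n : ℝ) / 2))]
  congr 1
  · rw [← mul_rpow (by positivity) (by positivity), ← mul_rpow (by positivity) (by positivity)]
    congr 1
    field_simp
  · rw [← exp_add, ← exp_add, neg_sq_norm_div_add_neg_sq_norm_div hs ht,
      sub_add_sub_cancel, ← norm_neg (y - _)]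
    congr 6
    match_scalars <;> field_simp
    ring

lemma integral_mul {s t : ℝ} (hs : 0 < s) (ht : 0 < t) (x z : EuclideanSpace ℝ (Fin n)) :
    ∫ y, heatKernel n s (x - y) * heatKernel n t (y - z) = heatKernel n (s + t) (x - z) := by
  simp_rw [mul_eq hs ht x z]
  rw [integral_const_mul, integral_sub_right_eq_self (heatKernel n _), integral_eq_one
    (by positivity), mul_one]

lemma integrable_mul {s t : ℝ} (hs : 0 < s) (ht : 0 < t) (x z : EuclideanSpace ℝ (Fin n)) :
    Integrable fun y => heatKernel n s (x - y) * heatKernel n t (y - z) := by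
  simp_rw [mul_eq hs ht x z]
  exact ((integrable (by positivity)).comp_sub_right _).const_mul _

lemma rpow_le {τ p : ℝ} (hτ : 0 < τ) (hp : 1 ≤ p) (w : EuclideanSpace ℝ (Fin n)) :
    heatKernel n τ w ^ p ≤ (4 * π * τ) ^ (-(n * (p - 1) / 2)) * heatKernel n τ w := by
  have hb : 0 < 4 * π * τ := by positivity
  have hexp : -‖w‖ ^ 2 / (4 * τ) * p ≤ -‖w‖ ^ 2 / (4 * τ) := by
    have : 0 ≤ ‖w‖ ^ 2 / (4 * τ) := by positivity
    rw [neg_div]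
    nlinarith
  rw [heatKernel, mul_rpow (rpow_nonneg hb.le _) (exp_nonneg _), ← rpow_mul hb.le, ← exp_mul,
    show -(n : ℝ) / 2 * p = -(n * (p - 1) / 2) + -(n : ℝ) / 2 by ring, rpow_add hb, mul_assoc]
  gcongr

lemma integral_mul_nonneg {s : ℝ} (hs : 0 ≤ s) {f : EuclideanSpace ℝ (Fin n) → ℝ}
    (hf : ∀ y, 0 ≤ f y) (x : EuclideanSpace ℝ (Fin n)) :
    0 ≤ ∫ y, heatKernel n s (x - y) * f y :=
  integral_nonneg fun y => mul_nonneg (nonneg hs _) (hf y)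

lemma integral_mul_le (hn : n ≠ 0) {s t c : ℝ} (hs : 0 ≤ s) (ht : 0 < t) (hc : 0 ≤ c)
    {f : EuclideanSpace ℝ (Fin n) → ℝ} {z : EuclideanSpace ℝ (Fin n)} (hf0 : ∀ y, 0 ≤ f y)
    (hf : ∀ y, f y ≤ c * heatKernel n t (y - z)) (x : EuclideanSpace ℝ (Fin n)) :
    ∫ y, heatKernel n s (x - y) * f y ≤ c * heatKernel n (s + t) (x - z) := by
  rcases hs.eq_or_lt with rfl | hs
  · simpa [zero_left hn] using mul_nonneg hc (nonneg ht.le (x - z))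
  calc ∫ y, heatKernel n s (x - y) * f y
      ≤ ∫ y, c * (heatKernel n s (x - y) * heatKernel n t (y - z)) :=
        integral_mono_of_nonneg (.of_forall fun y => mul_nonneg (nonneg hs.le _) (hf0 y))
          ((integrable_mul hs ht x z).const_mul c) (.of_forall fun y => by
            dsimp only
            rw [mul_left_comm]
            exact mul_le_mul_of_nonneg_left (hf y) (nonneg hs.le _))
    _ = c * heatKernel n (s + t) (x - z) := by rw [integral_const_mul, integral_mul hs ht]

lemma integral_mul_rpow_le (hn : n ≠ 0) {s τ p lam : ℝ} (hs : 0 ≤ s) (hτ : 0 < τ) (hp : 1 ≤ p)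
    (hlam : 0 ≤ lam) {v : EuclideanSpace ℝ (Fin n) → ℝ} {z : EuclideanSpace ℝ (Fin n)}
    (hv : ∀ y, 0 ≤ v y ∧ v y ≤ lam * heatKernel n τ (y - z)) (x : EuclideanSpace ℝ (Fin n)) :
    ∫ y, heatKernel n s (x - y) * v y ^ p
      ≤ lam ^ p * (4 * π * τ) ^ (-(n * (p - 1) / 2)) * heatKernel n (s + τ) (x - z) := by
  refine integral_mul_le hn hs hτ (by positivity) (fun y => rpow_nonneg (hv y).1 p) (fun y => ?_) x
  calc v y ^ p ≤ (lam * heatKernel n τ (y - z)) ^ p := by gcongr; exacts [(hv y).1, (hv y).2]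
    _ = lam ^ p * heatKernel n τ (y - z) ^ p := mul_rpow hlam (nonneg hτ.le _)
    _ ≤ lam ^ p * ((4 * π * τ) ^ (-(n * (p - 1) / 2)) * heatKernel n τ (y - z)) := by
        gcongr; exact rpow_le hτ hp _
    _ = _ := by ring

end heatKernel

/-- No integrability of `f` is needed: a non-integrable `f` has integral `0`. -/
lemma intervalIntegral.integral_mono_of_nonneg {f g : ℝ → ℝ} {a b : ℝ} (hab : a ≤ b)
    (hf : ∀ s ∈ Set.Ioc a b, 0 ≤ f s) (hg : IntervalIntegrable g volume a b)
    (hfg : ∀ s ∈ Set.Ioc a b, f s ≤ g s) :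
    ∫ s in a..b, f s ≤ ∫ s in a..b, g s := by
  rw [intervalIntegral.integral_of_le hab, intervalIntegral.integral_of_le hab]
  exact MeasureTheory.integral_mono_of_nonneg
    ((ae_restrict_iff' measurableSet_Ioc).2 (.of_forall hf)) hg.1
    ((ae_restrict_iff' measurableSet_Ioc).2 (.of_forall hfg))

lemma exists_pos_forall_rpow_mul_le {C p ε : ℝ} (hC : 0 ≤ C) (hp : 1 < p) (hε : 0 < ε) :
    ∃ l₀ > 0, ∀ l, 0 ≤ l → l ≤ l₀ → l ^ p * C ≤ ε * l := by
  refine ⟨(ε / (C + 1)) ^ (p - 1)⁻¹, by positivity, fun l hl hle => ?_⟩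
  have hlp : l ^ (p - 1) ≤ ε / (C + 1) :=
    calc l ^ (p - 1) ≤ ((ε / (C + 1)) ^ (p - 1)⁻¹) ^ (p - 1) := by gcongr
      _ = ε / (C + 1) := rpow_inv_rpow (by positivity) (by linarith)
  have hlpC : l ^ (p - 1) * C ≤ ε :=
    calc l ^ (p - 1) * C ≤ ε / (C + 1) * C := by gcongr
      _ ≤ ε := by
          rw [div_mul_eq_mul_div, div_le_iff₀ (by positivity)]
          nlinarith
  calc l ^ p * C = l * (l ^ (p - 1) * C) := by
        rw [← mul_assoc, ← rpow_one_add' hl (by linarith), add_sub_cancel]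
    _ ≤ l * ε := by gcongr
    _ = ε * l := mul_comm _ _

lemma one_lt_mul_sub_one_div_two {n p : ℝ} (hn : 0 < n) (hp : 1 + 2 / n < p) :
    1 < n * (p - 1) / 2 := by
  have := (div_lt_iff₀ hn).1 (lt_sub_iff_add_lt'.2 hp)
  linarith

/-- The value of `∫₀^∞ (4π(s + δ))^{-κ} ds` for `κ > 1` and `δ > 0`. -/
noncomputable def heatDecayIntegral (κ δ : ℝ) : ℝ :=
  (4 * π) ^ (-κ) * (δ ^ (1 - κ) / (κ - 1))

lemma heatDecayIntegral_nonneg {κ δ : ℝ} (hκ : 1 < κ) (hδ : 0 ≤ δ) :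
    0 ≤ heatDecayIntegral κ δ := by
  have : 0 < κ - 1 := by linarith
  unfold heatDecayIntegral
  positivity

lemma intervalIntegrable_rpow_four_pi_mul_add (κ : ℝ) {δ t : ℝ} (hδ : 0 < δ) (ht : 0 ≤ t) :
    IntervalIntegrable (fun s => (4 * π * (s + δ)) ^ (-κ)) volume 0 t := by
  refine ContinuousOn.intervalIntegrable (ContinuousOn.rpow_const (by fun_prop) fun s hs => ?_)
  rw [Set.uIcc_of_le ht] at hs
  exact Or.inl (by have := hs.1; positivity)

lemma integral_rpow_four_pi_mul_add_le {κ δ t : ℝ} (hκ : 1 < κ) (hδ : 0 < δ) (ht : 0 ≤ t) :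
    ∫ s in (0 : ℝ)..t, (4 * π * (s + δ)) ^ (-κ) ≤ heatDecayIntegral κ δ := by
  have hsplit : Set.EqOn (fun s => (4 * π * (s + δ)) ^ (-κ))
      (fun s => (4 * π) ^ (-κ) * (s + δ) ^ (-κ)) (Set.uIcc 0 t) := fun s hs => by
    rw [Set.uIcc_of_le ht] at hs
    exact mul_rpow (by positivity) (by linarith [hs.1])
  have h0 : (0 : ℝ) ∉ Set.uIcc (0 + δ) (t + δ) := by
    rw [Set.uIcc_of_le (by linarith)]
    exact fun h => by linarith [h.1]
  rw [intervalIntegral.integral_congr hsplit, intervalIntegral.integral_const_mul,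
    intervalIntegral.integral_comp_add_right (fun s => s ^ (-κ)),
    integral_rpow (Or.inr ⟨by linarith, h0⟩), zero_add, heatDecayIntegral]
  have hκ1 : 0 < κ - 1 := by linarith
  rw [show -κ + 1 = -(κ - 1) by ring, div_neg, ← neg_div, neg_sub,
    show -(κ - 1) = 1 - κ by ring]
  gcongr
  exact sub_le_self _ (rpow_nonneg (by linarith) _)

section Duhamel

variable {n : ℕ} {p δ lam : ℝ} {u : EuclideanSpace ℝ (Fin n) → ℝ → ℝ}
  {x₀ : EuclideanSpace ℝ (Fin n)}

lemma integral_integral_heatKernel_mul_rpow_nonneg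
    (hu : ∀ y, ∀ s : ℝ, 0 ≤ s → 0 ≤ u y s) {t : ℝ} (ht : 0 ≤ t) (x : EuclideanSpace ℝ (Fin n)) :
    0 ≤ ∫ s in (0 : ℝ)..t, ∫ y, heatKernel n (t - s) (x - y) * u y s ^ p :=
  intervalIntegral.integral_nonneg ht fun s hs =>
    heatKernel.integral_mul_nonneg (by linarith [hs.2]) (fun y => rpow_nonneg (hu y s hs.1) p) x

lemma integral_integral_heatKernel_mul_rpow_le (hn : n ≠ 0) (hp : 1 ≤ p)
    (hκ : 1 < n * (p - 1) / 2) (hδ : 0 < δ) (hlam : 0 ≤ lam)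
    (hu : ∀ y, ∀ s : ℝ, 0 ≤ s → 0 ≤ u y s ∧ u y s ≤ lam * heatKernel n (s + δ) (y - x₀))
    {t : ℝ} (ht : 0 ≤ t) (x : EuclideanSpace ℝ (Fin n)) :
    ∫ s in (0 : ℝ)..t, ∫ y, heatKernel n (t - s) (x - y) * u y s ^ p
      ≤ lam ^ p * heatDecayIntegral (n * (p - 1) / 2) δ * heatKernel n (t + δ) (x - x₀) := by
  set κ : ℝ := n * (p - 1) / 2
  set A := lam ^ p * heatKernel n (t + δ) (x - x₀)
  have hslice : ∀ s ∈ Set.Ioc 0 t, ∫ y, heatKernel n (t - s) (x - y) * u y s ^ p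
      ≤ A * (4 * π * (s + δ)) ^ (-κ) := fun s hs => by
    have h := heatKernel.integral_mul_rpow_le hn (sub_nonneg.2 hs.2) (by linarith [hs.1]) hp hlam
      (fun y => hu y s hs.1.le) x
    rwa [show t - s + (s + δ) = t + δ by ring, mul_right_comm] at h
  calc ∫ s in (0 : ℝ)..t, ∫ y, heatKernel n (t - s) (x - y) * u y s ^ p
      ≤ ∫ s in (0 : ℝ)..t, A * (4 * π * (s + δ)) ^ (-κ) :=
        intervalIntegral.integral_mono_of_nonneg ht
          (fun s hs => heatKernel.integral_mul_nonneg (by linarith [hs.2])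
            (fun y => rpow_nonneg (hu y s hs.1.le).1 p) x)
          ((intervalIntegrable_rpow_four_pi_mul_add κ hδ ht).const_mul A) hslice
    _ = A * ∫ s in (0 : ℝ)..t, (4 * π * (s + δ)) ^ (-κ) := intervalIntegral.integral_const_mul _ _
    _ ≤ A * heatDecayIntegral κ δ := by
        gcongr
        · exact mul_nonneg (rpow_nonneg hlam p) (heatKernel.nonneg (by linarith) _)
        · exact integral_rpow_four_pi_mul_add_le hκ hδ ht
    _ = _ := by ring

end Duhamel

/-- For `p > 1 + 2/n` and `δ > 1`, there is `λ₀ > 0` such that for all `0 < λ ≤ λ₀`, the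
operator `T` maps the set `S = {u : 0 ≤ u(x,t) ≤ λ G_{t+δ}(x - x₀)}` into itself, whenever
`0 ≤ u₀ ≤ (λ/2) G_δ(· - x₀)`. -/
theorem duhamelOp_maps_S_into_S (n : ℕ) (hn : 1 ≤ n) (p δ : ℝ)
    (hp : 1 + 2 / (n : ℝ) < p) (hδ : 1 < δ) (x₀ : EuclideanSpace ℝ (Fin n)) :
    ∃ lam₀ : ℝ, 0 < lam₀ ∧
      ∀ lam : ℝ, 0 < lam → lam ≤ lam₀ →
        ∀ u₀ : EuclideanSpace ℝ (Fin n) → ℝ, Measurable u₀ →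
          (∀ x, 0 ≤ u₀ x ∧ u₀ x ≤ lam / 2 * heatKernel n δ (x - x₀)) →
          ∀ u : EuclideanSpace ℝ (Fin n) → ℝ → ℝ,
            Measurable (fun q : EuclideanSpace ℝ (Fin n) × ℝ => u q.1 q.2) →
            (∀ y, ∀ s : ℝ, 0 ≤ s →
              0 ≤ u y s ∧ u y s ≤ lam * heatKernel n (s + δ) (y - x₀)) →
            ∀ x, ∀ t : ℝ, 0 ≤ t →
              0 ≤ duhamelOp n p u₀ u x t ∧
                duhamelOp n p u₀ u x t ≤ lam * heatKernel n (t + δ) (x - x₀) := by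
  have hn0 : n ≠ 0 := by omega
  have hnpos : (0 : ℝ) < n := by exact_mod_cast hn
  have hκ := one_lt_mul_sub_one_div_two hnpos hp
  have hp1 : 1 < p := by linarith [div_pos two_pos hnpos]
  have hδ0 : 0 < δ := by linarith
  obtain ⟨lam₀, hlam₀, hsmall⟩ :=
    exists_pos_forall_rpow_mul_le (heatDecayIntegral_nonneg hκ hδ0.le) hp1 one_half_pos
  refine ⟨lam₀, hlam₀, fun lam hlam hle u₀ _ hu₀ u _ hu x t ht => ?_⟩
  have hG := heatKernel.nonneg (by linarith : 0 ≤ t + δ) (x - x₀)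
  constructor
  · exact add_nonneg (heatKernel.integral_mul_nonneg ht (fun y => (hu₀ y).1) x)
      (integral_integral_heatKernel_mul_rpow_nonneg (fun y s hs => (hu y s hs).1) ht x)
  · calc duhamelOp n p u₀ u x t
        ≤ lam / 2 * heatKernel n (t + δ) (x - x₀)
          + lam ^ p * heatDecayIntegral (n * (p - 1) / 2) δ * heatKernel n (t + δ) (x - x₀) :=
          add_le_add
            (heatKernel.integral_mul_le hn0 ht hδ0 (by positivity) (fun y => (hu₀ y).1)
              (fun y => (hu₀ y).2) x)
            (integral_integral_heatKernel_mul_rpow_le hn0 hp1.le hκ hδ0 hlam.le hu ht x)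
      _ ≤ lam / 2 * heatKernel n (t + δ) (x - x₀)
          + 1 / 2 * lam * heatKernel n (t + δ) (x - x₀) := by
          gcongr _ + ?_ * _
          exact hsmall lam hlam.le hle
      _ = lam * heatKernel n (t + δ) (x - x₀) := by ring
end

section
/- Let n ≥ 1, p > 1 + 2/n, δ > 1, and fix x₀ ∈ ℝⁿ. Then there exists λ₀ > 0 such that for every 0 < λ ≤ λ₀, every measurable u₀ with 0 ≤ u₀(x) ≤ (λ/2)·G_δ(x − x₀), and all measurable u₁, u₂ : ℝⁿ × [0,∞) → ℝ that are essentially bounded and satisfy 0 ≤ u_i(y,s) ≤ λ·G_{s+δ}(y − x₀) (i = 1,2), the operator Tu(x,t) := ∫_{ℝⁿ} G_t(x − y)u₀(y) dy + ∫₀ᵗ ∫_{ℝⁿ} G_{t−s}(x − y)·u(y,s)^p dy ds satisfies |Tu₁(x,t) − Tu₂(x,t)| ≤ p·λ^{p−1}·K·‖u₁ − u₂‖_{L^∞} for all (x,t), where K = ∫₀^∞ (4π(s+δ))^{−n(p−1)/2} ds < ∞ and p·λ₀^{p−1}·K < 1; in particular T is a contraction on the set S = { u : 0 ≤ u(x,t)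 ≤ λ G_{t+δ}(x−x₀) } in the L^∞ norm. -/
open MeasureTheory Real

/-- The `L^∞` (essential supremum) norm of `u₁ - u₂` over `ℝⁿ × [0,∞)`. -/
noncomputable def linftyDist (n : ℕ) (u₁ u₂ : EuclideanSpace ℝ (Fin n) → ℝ → ℝ) : ℝ :=
  (essSup (fun q : EuclideanSpace ℝ (Fin n) × ℝ => ENNReal.ofReal |u₁ q.1 q.2 - u₂ q.1 q.2|)
    (MeasureTheory.volume.restrict {q : EuclideanSpace ℝ (Fin n) × ℝ | 0 ≤ q.2})).toReal

/-!
The `u₀` terms of `Tu₁` and `Tu₂` cancel, so only the Duhamel terms differ. For `s ≥ 0` both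
`u₁(·,s)` and `u₂(·,s)` take values in `[0, λ (4π(s+δ))^{-n/2}]`, so the mean value theorem gives
`|u₁^p - u₂^p| ≤ p λ^{p-1} (4π(s+δ))^{-n(p-1)/2} |u₁ - u₂|`. Since `G_{t-s}(x - ·)` has mass one,
the `y`-integral costs nothing, and the `s`-integral over `(0,t) ⊆ (0,∞)` produces the factor `K`,
which is finite because `n(p-1)/2 > 1`.
-/

open Set Filter

section HeatKernel

variable {n : ℕ} {t : ℝ}

lemma heatKernel_nonneg (ht : 0 ≤ t) (z : EuclideanSpace ℝ (Fin n)) : 0 ≤ heatKernel n t z :=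
  mul_nonneg (rpow_nonneg (by positivity) _) (exp_nonneg _)

lemma heatKernel_le (ht : 0 ≤ t) (z : EuclideanSpace ℝ (Fin n)) :
    heatKernel n t z ≤ (4 * π * t) ^ (-(n : ℝ) / 2) :=
  mul_le_of_le_one_right (rpow_nonneg (by positivity) _)
    (exp_le_one_iff.mpr (div_nonpos_of_nonpos_of_nonneg (neg_nonpos.mpr (sq_nonneg _))
      (by positivity)))

lemma measurable_heatKernel_uncurry :
    Measurable fun q : ℝ × EuclideanSpace ℝ (Fin n) => heatKernel n q.1 q.2 :=
  ((measurable_fst.const_mul _).pow_const _).mul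
    (((measurable_snd.norm.pow_const 2).neg.div (measurable_fst.const_mul 4)).exp)

lemma integral_heatKernel (ht : 0 < t) : ∫ z, heatKernel n t z = 1 := by
  have hb : 0 < 1 / (4 * t) := by positivity
  calc ∫ z, heatKernel n t z
      = (4 * π * t) ^ (-(n : ℝ) / 2) *
          ∫ z : EuclideanSpace ℝ (Fin n), exp (-(1 / (4 * t)) * ‖z‖ ^ 2) := by
        rw [← integral_const_mul]
        congr 1 with z
        rw [heatKernel]
        congr 2
        ring
    _ = (4 * π * t) ^ (-(n : ℝ) / 2) * (4 * π * t) ^ ((n : ℝ) / 2) := by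
        rw [GaussianFourier.integral_rexp_neg_mul_sq_norm hb, finrank_euclideanSpace_fin]
        congr 2
        field_simp
    _ = 1 := by rw [← rpow_add (by positivity), neg_div, neg_add_cancel, rpow_zero]

lemma integral_heatKernel_sub (ht : 0 < t) (x : EuclideanSpace ℝ (Fin n)) :
    ∫ y, heatKernel n t (x - y) = 1 := by
  rw [integral_sub_left_eq_self (heatKernel n t) volume x, integral_heatKernel ht]

lemma integrable_heatKernel_sub (ht : 0 < t) (x : EuclideanSpace ℝ (Fin n)) :
    Integrable fun y => heatKernel n t (x - y) :=
  integrable_of_integral_eq_one (integral_heatKernel_sub ht x)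

variable {g : EuclideanSpace ℝ (Fin n) → ℝ} {C : ℝ}

lemma integrable_heatKernel_sub_mul (ht : 0 < t) (x : EuclideanSpace ℝ (Fin n))
    (hg : AEStronglyMeasurable g) (hC : ∀ᵐ y, |g y| ≤ C) :
    Integrable fun y => heatKernel n t (x - y) * g y :=
  (integrable_heatKernel_sub ht x).mul_bdd hg hC

lemma abs_integral_heatKernel_sub_mul_le (ht : 0 < t) (x : EuclideanSpace ℝ (Fin n))
    (hC : ∀ᵐ y, |g y| ≤ C) : |∫ y, heatKernel n t (x - y) * g y| ≤ C := by
  have hG := heatKernel_nonneg (n := n) ht.le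
  rw [← norm_eq_abs]
  calc ‖∫ y, heatKernel n t (x - y) * g y‖
      ≤ ∫ y, heatKernel n t (x - y) * C :=
        norm_integral_le_of_norm_le ((integrable_heatKernel_sub ht x).mul_const C) <|
          hC.mono fun y hy => by
            rw [norm_mul, norm_of_nonneg (hG _)]
            exact mul_le_mul_of_nonneg_left hy (hG _)
    _ = C := by rw [integral_mul_const, integral_heatKernel_sub ht, one_mul]

end HeatKernel

lemma abs_rpow_sub_rpow_le {p a b m : ℝ} (hp : 1 ≤ p) (ha : 0 ≤ a) (hb : 0 ≤ b)
    (ham : a ≤ m) (hbm : b ≤ m) : |a ^ p - b ^ p| ≤ p * m ^ (p - 1) * |a - b| := by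
  have hderiv : ∀ z ∈ Icc 0 m,
      HasDerivWithinAt (fun w : ℝ => w ^ p) (p * z ^ (p - 1)) (Icc 0 m) z :=
    fun z _ => (hasDerivAt_rpow_const (Or.inr hp)).hasDerivWithinAt
  have hbound : ∀ z ∈ Icc 0 m, ‖p * z ^ (p - 1)‖ ≤ p * m ^ (p - 1) := fun z hz => by
    rw [norm_of_nonneg (by have := rpow_nonneg hz.1 (p - 1); positivity)]
    exact mul_le_mul_of_nonneg_left (rpow_le_rpow hz.1 hz.2 (by linarith)) (by linarith)
  simpa only [norm_eq_abs] using Convex.norm_image_sub_le_of_norm_hasDerivWithin_le hderiv hbound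
    (convex_Icc 0 m) ⟨hb, hbm⟩ ⟨ha, ham⟩

lemma integrableOn_Ioi_mul_add_rpow {c δ r : ℝ} (hc : 0 ≤ c) (hδ : 0 < δ) (hr : r < -1) :
    IntegrableOn (fun s : ℝ => (c * (s + δ)) ^ r) (Ioi 0) :=
  IntegrableOn.congr_fun ((integrableOn_add_rpow_Ioi_of_lt hr (neg_lt_zero.mpr hδ)).const_mul _)
    (fun s hs => (mul_rpow hc (by linarith [mem_Ioi.mp hs])).symm) measurableSet_Ioi

lemma neg_mul_sub_one_div_two_lt_neg_one {n : ℕ} {p : ℝ} (hn : 1 ≤ n)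
    (hp : 1 + 2 / (n : ℝ) < p) : -(n : ℝ) * (p - 1) / 2 < -1 := by
  have hn0 : (0 : ℝ) < n := by exact_mod_cast hn
  have h : 2 < (p - 1) * n := (div_lt_iff₀ hn0).mp (by linarith)
  linarith

lemma exists_pos_mul_rpow_mul_lt_one {p K : ℝ} (hp : 1 < p) (hK : 0 ≤ K) :
    ∃ lam₀ : ℝ, 0 < lam₀ ∧ p * lam₀ ^ (p - 1) * K < 1 := by
  have hc : 0 < (p * K + 1)⁻¹ := by positivity
  refine ⟨(p * K + 1)⁻¹ ^ (p - 1)⁻¹, rpow_pos_of_pos hc _, ?_⟩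
  rw [← rpow_mul hc.le, inv_mul_cancel₀ (sub_pos.mpr hp).ne', rpow_one, mul_right_comm,
    ← div_eq_mul_inv, div_lt_one (by positivity)]
  exact lt_add_one _

/- The bound `C` keeps the essential supremum finite; otherwise `linftyDist` would be the junk
value `0`. -/
lemma ae_ae_abs_sub_le_linftyDist {n : ℕ} {u₁ u₂ : EuclideanSpace ℝ (Fin n) → ℝ → ℝ} {C : ℝ}
    (hC : ∀ y, ∀ s : ℝ, 0 ≤ s → |u₁ y s - u₂ y s| ≤ C) :
    ∀ᵐ s ∂volume.restrict (Ici 0), ∀ᵐ y, |u₁ y s - u₂ y s| ≤ linftyDist n u₁ u₂ := by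
  set f := fun q : EuclideanSpace ℝ (Fin n) × ℝ => ENNReal.ofReal |u₁ q.1 q.2 - u₂ q.1 q.2|
  have hhalf : {q : EuclideanSpace ℝ (Fin n) × ℝ | 0 ≤ q.2} = univ ×ˢ Ici 0 := by ext; simp
  have hprod : volume.restrict (univ ×ˢ Ici (0 : ℝ))
      = (volume : Measure (EuclideanSpace ℝ (Fin n))).prod (volume.restrict (Ici 0)) := by
    rw [Measure.volume_eq_prod, ← Measure.prod_restrict, Measure.restrict_univ]
  have hfin : essSup f (volume.restrict {q | 0 ≤ q.2}) ≠ ⊤ :=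
    ne_top_of_le_ne_top ENNReal.ofReal_ne_top <| essSup_le_of_ae_le _ <|
      (ae_restrict_iff' (measurableSet_le measurable_const measurable_snd)).mpr <|
        ae_of_all _ fun q hq => ENNReal.ofReal_le_ofReal (hC q.1 q.2 hq)
  have h : ∀ᵐ q ∂volume.restrict {q : EuclideanSpace ℝ (Fin n) × ℝ | 0 ≤ q.2},
      |u₁ q.1 q.2 - u₂ q.1 q.2| ≤ linftyDist n u₁ u₂ :=
    (ENNReal.ae_le_essSup f).mono fun q hq => by
      simpa only [f, linftyDist, ENNReal.toReal_ofReal (abs_nonneg _)] using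
        ENNReal.toReal_mono hfin hq
  rw [hhalf, hprod] at h
  exact Measure.ae_ae_of_ae_prod (Measure.measurePreserving_swap.quasiMeasurePreserving.ae h)

/-- The set `S` on which `T` is a contraction. -/
def heatBarrier (n : ℕ) (lam δ : ℝ) (x₀ : EuclideanSpace ℝ (Fin n)) :
    Set (EuclideanSpace ℝ (Fin n) → ℝ → ℝ) :=
  {u | ∀ y, ∀ s : ℝ, 0 ≤ s → 0 ≤ u y s ∧ u y s ≤ lam * heatKernel n (s + δ) (y - x₀)}

section HeatBarrier

variable {n : ℕ} {p lam δ s : ℝ} {x₀ y : EuclideanSpace ℝ (Fin n)}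
  {u u₁ u₂ : EuclideanSpace ℝ (Fin n) → ℝ → ℝ}

lemma le_rpow_of_mem_heatBarrier (hu : u ∈ heatBarrier n lam δ x₀) (hlam : 0 ≤ lam)
    (hδ : 0 ≤ δ) (hs : 0 ≤ s) : u y s ≤ lam * (4 * π * (s + δ)) ^ (-(n : ℝ) / 2) :=
  (hu y s hs).2.trans (mul_le_mul_of_nonneg_left (heatKernel_le (by positivity) _) hlam)

lemma le_rpow_zero_of_mem_heatBarrier (hu : u ∈ heatBarrier n lam δ x₀) (hlam : 0 ≤ lam)
    (hδ : 0 < δ) (hs : 0 ≤ s) : u y s ≤ lam * (4 * π * δ) ^ (-(n : ℝ) / 2) := by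
  refine (le_rpow_of_mem_heatBarrier hu hlam hδ.le hs).trans (mul_le_mul_of_nonneg_left ?_ hlam)
  exact rpow_le_rpow_of_nonpos (by positivity) (by nlinarith [pi_pos])
    (div_nonpos_of_nonpos_of_nonneg (neg_nonpos.mpr n.cast_nonneg) zero_le_two)

lemma abs_sub_le_of_mem_heatBarrier (h₁ : u₁ ∈ heatBarrier n lam δ x₀)
    (h₂ : u₂ ∈ heatBarrier n lam δ x₀) (hlam : 0 ≤ lam) (hδ : 0 < δ) (hs : 0 ≤ s) :
    |u₁ y s - u₂ y s| ≤ lam * (4 * π * δ) ^ (-(n : ℝ) / 2) :=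
  abs_sub_le_of_nonneg_of_le (h₁ y s hs).1 (le_rpow_zero_of_mem_heatBarrier h₁ hlam hδ hs)
    (h₂ y s hs).1 (le_rpow_zero_of_mem_heatBarrier h₂ hlam hδ hs)

lemma abs_rpow_le_of_mem_heatBarrier (hu : u ∈ heatBarrier n lam δ x₀) (hp : 0 ≤ p)
    (hlam : 0 ≤ lam) (hδ : 0 < δ) (hs : 0 ≤ s) :
    |u y s ^ p| ≤ (lam * (4 * π * δ) ^ (-(n : ℝ) / 2)) ^ p := by
  rw [abs_of_nonneg (rpow_nonneg (hu y s hs).1 p)]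
  exact rpow_le_rpow (hu y s hs).1 (le_rpow_zero_of_mem_heatBarrier hu hlam hδ hs) hp

lemma abs_rpow_sub_rpow_le_of_mem_heatBarrier (h₁ : u₁ ∈ heatBarrier n lam δ x₀)
    (h₂ : u₂ ∈ heatBarrier n lam δ x₀) (hp : 1 ≤ p) (hlam : 0 ≤ lam) (hδ : 0 ≤ δ)
    (hs : 0 ≤ s) :
    |u₁ y s ^ p - u₂ y s ^ p| ≤
      p * lam ^ (p - 1) * (4 * π * (s + δ)) ^ (-(n : ℝ) * (p - 1) / 2) * |u₁ y s - u₂ y s| := by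
  have hpow : (lam * (4 * π * (s + δ)) ^ (-(n : ℝ) / 2)) ^ (p - 1)
      = lam ^ (p - 1) * (4 * π * (s + δ)) ^ (-(n : ℝ) * (p - 1) / 2) := by
    rw [mul_rpow hlam (rpow_nonneg (by positivity) _), ← rpow_mul (by positivity)]
    ring_nf
  calc |u₁ y s ^ p - u₂ y s ^ p|
      ≤ p * (lam * (4 * π * (s + δ)) ^ (-(n : ℝ) / 2)) ^ (p - 1) * |u₁ y s - u₂ y s| :=
        abs_rpow_sub_rpow_le hp (h₁ y s hs).1 (h₂ y s hs).1
          (le_rpow_of_mem_heatBarrier h₁ hlam hδ hs)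
          (le_rpow_of_mem_heatBarrier h₂ hlam hδ hs)
    _ = _ := by
        rw [hpow]
        ring

end HeatBarrier

noncomputable def duhamelIntegrand (n : ℕ) (p : ℝ)
    (u : EuclideanSpace ℝ (Fin n) → ℝ → ℝ) (x : EuclideanSpace ℝ (Fin n)) (t s : ℝ) : ℝ :=
  ∫ y, heatKernel n (t - s) (x - y) * u y s ^ p

section Duhamel

variable {n : ℕ} {p lam δ t : ℝ} {x₀ x : EuclideanSpace ℝ (Fin n)}
  {u u₁ u₂ : EuclideanSpace ℝ (Fin n) → ℝ → ℝ}

lemma duhamelOp_sub_duhamelOp (u₀ : EuclideanSpace ℝ (Fin n) → ℝ)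
    (h₁ : IntervalIntegrable (duhamelIntegrand n p u₁ x t) volume 0 t)
    (h₂ : IntervalIntegrable (duhamelIntegrand n p u₂ x t) volume 0 t) :
    duhamelOp n p u₀ u₁ x t - duhamelOp n p u₀ u₂ x t
      = ∫ s in 0..t, (duhamelIntegrand n p u₁ x t s - duhamelIntegrand n p u₂ x t s) := by
  rw [intervalIntegral.integral_sub h₁ h₂]
  exact add_sub_add_left_eq_sub _ _ _

lemma stronglyMeasurable_duhamelIntegrand
    (hu : Measurable fun q : EuclideanSpace ℝ (Fin n) × ℝ => u q.1 q.2) :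
    StronglyMeasurable (duhamelIntegrand n p u x t) :=
  ((measurable_heatKernel_uncurry.comp ((measurable_const.sub measurable_fst).prodMk
    (measurable_const.sub measurable_snd))).mul
      ((hu.comp measurable_swap).pow_const p)).stronglyMeasurable.integral_prod_right'

lemma intervalIntegrable_duhamelIntegrand (hu : u ∈ heatBarrier n lam δ x₀)
    (hum : Measurable fun q : EuclideanSpace ℝ (Fin n) × ℝ => u q.1 q.2) (hp : 0 ≤ p)
    (hlam : 0 ≤ lam) (hδ : 0 < δ) (ht : 0 ≤ t) :
    IntervalIntegrable (duhamelIntegrand n p u x t) volume 0 t := by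
  rw [intervalIntegrable_iff_integrableOn_Ioc_of_le ht]
  refine Measure.integrableOn_of_bounded (M := (lam * (4 * π * δ) ^ (-(n : ℝ) / 2)) ^ p)
    (by simp [Real.volume_Ioc])
    (stronglyMeasurable_duhamelIntegrand hum).aestronglyMeasurable
    ((ae_restrict_iff' measurableSet_Ioc).mpr ((Measure.ae_ne volume t).mono fun s hst hs => ?_))
  exact abs_integral_heatKernel_sub_mul_le (sub_pos.mpr (lt_of_le_of_ne hs.2 hst)) x
    (ae_of_all _ fun y => abs_rpow_le_of_mem_heatBarrier hu hp hlam hδ hs.1.le)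

lemma abs_duhamelIntegrand_sub_le (h₁ : u₁ ∈ heatBarrier n lam δ x₀)
    (h₂ : u₂ ∈ heatBarrier n lam δ x₀)
    (hm₁ : Measurable fun q : EuclideanSpace ℝ (Fin n) × ℝ => u₁ q.1 q.2)
    (hm₂ : Measurable fun q : EuclideanSpace ℝ (Fin n) × ℝ => u₂ q.1 q.2)
    (hp : 1 ≤ p) (hlam : 0 ≤ lam) (hδ : 0 < δ) {s M : ℝ} (hs : 0 ≤ s) (hst : s < t)
    (hM : ∀ᵐ y, |u₁ y s - u₂ y s| ≤ M) :
    |duhamelIntegrand n p u₁ x t s - duhamelIntegrand n p u₂ x t s|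
      ≤ p * lam ^ (p - 1) * (4 * π * (s + δ)) ^ (-(n : ℝ) * (p - 1) / 2) * M := by
  have hr : 0 < t - s := sub_pos.mpr hst
  have hint : ∀ {u}, u ∈ heatBarrier n lam δ x₀ →
      (Measurable fun q : EuclideanSpace ℝ (Fin n) × ℝ => u q.1 q.2) →
      Integrable fun y => heatKernel n (t - s) (x - y) * u y s ^ p := fun hu hum =>
    integrable_heatKernel_sub_mul hr x
      ((hum.comp (measurable_id.prodMk measurable_const)).pow_const p).aestronglyMeasurable
      (ae_of_all _ fun y => abs_rpow_le_of_mem_heatBarrier hu (by linarith) hlam hδ hs)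
  have hc : 0 ≤ p * lam ^ (p - 1) * (4 * π * (s + δ)) ^ (-(n : ℝ) * (p - 1) / 2) := by
    have := rpow_nonneg hlam (p - 1)
    have : 0 ≤ (4 * π * (s + δ)) ^ (-(n : ℝ) * (p - 1) / 2) := rpow_nonneg (by positivity) _
    positivity
  rw [duhamelIntegrand, duhamelIntegrand, ← integral_sub (hint h₁ hm₁) (hint h₂ hm₂)]
  simp only [← mul_sub]
  exact abs_integral_heatKernel_sub_mul_le hr x <| hM.mono fun y hy =>
    (abs_rpow_sub_rpow_le_of_mem_heatBarrier h₁ h₂ hp hlam hδ.le hs).trans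
      (mul_le_mul_of_nonneg_left hy hc)

theorem abs_duhamelOp_sub_le (h₁ : u₁ ∈ heatBarrier n lam δ x₀)
    (h₂ : u₂ ∈ heatBarrier n lam δ x₀)
    (hm₁ : Measurable fun q : EuclideanSpace ℝ (Fin n) × ℝ => u₁ q.1 q.2)
    (hm₂ : Measurable fun q : EuclideanSpace ℝ (Fin n) × ℝ => u₂ q.1 q.2)
    (hp : 1 ≤ p) (hlam : 0 ≤ lam) (hδ : 0 < δ)
    (hk : IntegrableOn (fun s : ℝ => (4 * π * (s + δ)) ^ (-(n : ℝ) * (p - 1) / 2)) (Ioi 0))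
    (u₀ : EuclideanSpace ℝ (Fin n) → ℝ) (ht : 0 ≤ t) :
    |duhamelOp n p u₀ u₁ x t - duhamelOp n p u₀ u₂ x t|
      ≤ p * lam ^ (p - 1) * (∫ s in Ioi 0, (4 * π * (s + δ)) ^ (-(n : ℝ) * (p - 1) / 2)) *
        linftyDist n u₁ u₂ := by
  set M := linftyDist n u₁ u₂
  set bound := fun s : ℝ =>
    p * lam ^ (p - 1) * (4 * π * (s + δ)) ^ (-(n : ℝ) * (p - 1) / 2) * M
  have hbound : IntegrableOn bound (Ioi 0) := (hk.const_mul _).mul_const _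
  have hM : ∀ᵐ s, s ∈ Ici 0 → ∀ᵐ y, |u₁ y s - u₂ y s| ≤ M :=
    (ae_restrict_iff' measurableSet_Ici).mp <| ae_ae_abs_sub_le_linftyDist
      fun y s hs => abs_sub_le_of_mem_heatBarrier h₁ h₂ hlam hδ hs
  calc |duhamelOp n p u₀ u₁ x t - duhamelOp n p u₀ u₂ x t|
      = ‖∫ s in 0..t, (duhamelIntegrand n p u₁ x t s - duhamelIntegrand n p u₂ x t s)‖ := by
        rw [duhamelOp_sub_duhamelOp u₀
          (intervalIntegrable_duhamelIntegrand h₁ hm₁ (by linarith) hlam hδ ht)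
          (intervalIntegrable_duhamelIntegrand h₂ hm₂ (by linarith) hlam hδ ht), norm_eq_abs]
    _ ≤ ∫ s in 0..t, bound s := by
        refine intervalIntegral.norm_integral_le_of_norm_le ht ?_
          ((intervalIntegrable_iff_integrableOn_Ioc_of_le ht).mpr
            (hbound.mono_set Ioc_subset_Ioi_self))
        filter_upwards [Measure.ae_ne volume t, hM] with s hst hsM hs
        exact abs_duhamelIntegrand_sub_le h₁ h₂ hm₁ hm₂ hp hlam hδ hs.1.le
          (lt_of_le_of_ne hs.2 hst) (hsM hs.1.le)
    _ ≤ ∫ s in Ioi 0, bound s := by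
        rw [intervalIntegral.integral_of_le ht]
        refine setIntegral_mono_set hbound ((ae_restrict_iff' measurableSet_Ioi).mpr
          (ae_of_all _ fun s hs => ?_)) Ioc_subset_Ioi_self.eventuallyLE
        have := rpow_nonneg hlam (p - 1)
        have : 0 ≤ (4 * π * (s + δ)) ^ (-(n : ℝ) * (p - 1) / 2) :=
          rpow_nonneg (by have := mem_Ioi.mp hs; positivity) _
        have : 0 ≤ M := ENNReal.toReal_nonneg
        have : 0 ≤ p := by linarith
        positivity
    _ = _ := by rw [integral_mul_const, integral_const_mul]

end Duhamel

/-- For `p > 1 + 2/n` and `δ > 1`, with `K = ∫₀^∞ (4π(s+δ))^{-n(p-1)/2} ds < ∞`, there is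
`λ₀ > 0` with `p λ₀^{p-1} K < 1` such that for all `0 < λ ≤ λ₀` the operator `T` is a
contraction on `S = {u : 0 ≤ u(x,t) ≤ λ G_{t+δ}(x - x₀)}` in the `L^∞` norm:
`|Tu₁(x,t) - Tu₂(x,t)| ≤ p λ^{p-1} K ‖u₁ - u₂‖_{L^∞}`. -/
theorem duhamelOp_contraction (n : ℕ) (hn : 1 ≤ n) (p δ : ℝ)
    (hp : 1 + 2 / (n : ℝ) < p) (hδ : 1 < δ) (x₀ : EuclideanSpace ℝ (Fin n)) :
    IntegrableOn (fun s : ℝ => (4 * Real.pi * (s + δ)) ^ (-(n : ℝ) * (p - 1) / 2))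
      (Set.Ioi (0 : ℝ)) ∧
    ∃ lam₀ : ℝ, 0 < lam₀ ∧
      p * lam₀ ^ (p - 1) *
        (∫ s in Set.Ioi (0 : ℝ), (4 * Real.pi * (s + δ)) ^ (-(n : ℝ) * (p - 1) / 2)) < 1 ∧
      ∀ lam : ℝ, 0 < lam → lam ≤ lam₀ →
        ∀ u₀ : EuclideanSpace ℝ (Fin n) → ℝ, Measurable u₀ →
          (∀ x, 0 ≤ u₀ x ∧ u₀ x ≤ lam / 2 * heatKernel n δ (x - x₀)) →
          ∀ u₁ u₂ : EuclideanSpace ℝ (Fin n) → ℝ → ℝ,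
            Measurable (fun q : EuclideanSpace ℝ (Fin n) × ℝ => u₁ q.1 q.2) →
            Measurable (fun q : EuclideanSpace ℝ (Fin n) × ℝ => u₂ q.1 q.2) →
            (∀ y, ∀ s : ℝ, 0 ≤ s →
              0 ≤ u₁ y s ∧ u₁ y s ≤ lam * heatKernel n (s + δ) (y - x₀)) →
            (∀ y, ∀ s : ℝ, 0 ≤ s →
              0 ≤ u₂ y s ∧ u₂ y s ≤ lam * heatKernel n (s + δ) (y - x₀)) →
            ∀ x, ∀ t : ℝ, 0 ≤ t →
              |duhamelOp n p u₀ u₁ x t - duhamelOp n p u₀ u₂ x t| ≤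
                p * lam ^ (p - 1) *
                  (∫ s in Set.Ioi (0 : ℝ),
                    (4 * Real.pi * (s + δ)) ^ (-(n : ℝ) * (p - 1) / 2)) *
                  linftyDist n u₁ u₂ := by
  have hp₁ : 1 < p := lt_of_le_of_lt (le_add_of_nonneg_right (by positivity)) hp
  have hδ₀ : 0 < δ := by linarith
  have hk := integrableOn_Ioi_mul_add_rpow (c := 4 * π) (by positivity) hδ₀
    (neg_mul_sub_one_div_two_lt_neg_one hn hp)
  have hK : 0 ≤ ∫ s in Ioi (0 : ℝ), (4 * π * (s + δ)) ^ (-(n : ℝ) * (p - 1) / 2) :=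
    setIntegral_nonneg measurableSet_Ioi fun s hs =>
      rpow_nonneg (by have := mem_Ioi.mp hs; positivity) _
  obtain ⟨lam₀, hlam₀, hcontr⟩ := exists_pos_mul_rpow_mul_lt_one hp₁ hK
  refine ⟨hk, lam₀, hlam₀, hcontr, ?_⟩
  intro lam hlam _ u₀ _ _ u₁ u₂ hm₁ hm₂ h₁ h₂ x t ht
  exact abs_duhamelOp_sub_le h₁ h₂ hm₁ hm₂ hp₁.le hlam.le hδ₀ hk u₀ ht
end
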